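/- Let t > 0 and let N ≥ 1 be an integer. Let Y have the discrete Laplace distribution Lap_ℤ(t), i.e., Pr[Y = x] = ((e^{1/t} − 1)/(e^{1/t} + 1))·e^{−|x|/t} for x ∈ ℤ. Then Pr[|Y| ≥ N] = 2·e^{−(N−1)/t}/(e^{1/t} + 1). Consequently, the statistical distance between Lap_ℤ(t) and the truncated discrete Laplace distribution obtained by conditioning Lap_ℤ(t) on the event Y ∈ (−N, N) ∩ ℤ equals 2·e^{−(N−1)/t}/(e^{1/t} + 1). -/

import Mathlib

open Real

/-!
With `r = e^{-1/t}` the mass function is `c·r^{|x|}` with `c = (1 - r)/(1 + r)`, so the tail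
`|x| ≥ N` consists of two geometric series and has mass `2c·r^N/(1 - r) = 2r^N/(1 + r)`.
For any probability mass function `p` and set `s` of mass `S > 0`, the truncation to `s` is
`p/S` on `s` and `0` off `s`, so `∑ |p - p(· | s)| = (1/S - 1)·S + (1 - S) = 2(1 - S)`:
the statistical distance is the mass outside `s`, here the tail.
-/

section Truncation

variable {α : Type*}

noncomputable def truncation (p : α → ℝ) (s : Set α) : α → ℝ :=
  s.indicator fun x => p x / ∑' y : s, p y

theorem half_tsum_abs_sub_truncation {p : α → ℝ} (hp : ∀ x, 0 ≤ p x) (hp1 : HasSum p 1)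
    {s : Set α} (hs : 0 < ∑' y : s, p y) :
    (1 / 2) * ∑' x, |p x - truncation p s x| = ∑' x : ↥sᶜ, p x := by
  set S := ∑' y : s, p y
  set T := ∑' x : ↥sᶜ, p x
  have hsum_s : HasSum (fun x : s => p x) S := (hp1.summable.subtype s).hasSum
  have hsum_sc : HasSum (fun x : ↥sᶜ => p x) T := (hp1.summable.subtype sᶜ).hasSum
  have hST : S + T = 1 := (hsum_s.add_compl hsum_sc).unique hp1
  have hT : 0 ≤ T := tsum_nonneg fun x => hp x
  have hin : HasSum (fun x : s => |p x - truncation p s x|) T := by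
    have hscaled := hsum_s.mul_right (T / S)
    rw [mul_div_cancel₀ T hs.ne'] at hscaled
    refine hscaled.congr_fun fun ⟨x, hx⟩ => ?_
    have hdiff : p x - p x / S = -(p x * (T / S)) := by
      field_simp
      linear_combination p x * hST
    rw [truncation, Set.indicator_of_mem hx, hdiff, abs_neg,
      abs_of_nonneg (mul_nonneg (hp x) (div_nonneg hT hs.le))]
  have hout : HasSum (fun x : ↥sᶜ => |p x - truncation p s x|) T :=
    hsum_sc.congr_fun fun ⟨x, hx⟩ => by
      rw [truncation, Set.indicator_of_notMem hx, sub_zero, abs_of_nonneg (hp x)]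
  rw [(HasSum.add_compl (f := fun x => |p x - truncation p s x|) hin hout).tsum_eq]
  ring

end Truncation

section TwoSidedGeometric

variable {r : ℝ}

theorem hasSum_pow_natAbs (hr0 : 0 ≤ r) (hr1 : r < 1) :
    HasSum (fun x : ℤ => r ^ x.natAbs) ((1 + r) / (1 - r)) := by
  have hgeom := hasSum_geometric_of_lt_one hr0 hr1
  have hneg : HasSum (fun n : ℕ => r ^ (-(n + 1 : ℤ)).natAbs) (r * (1 - r)⁻¹) :=
    (hgeom.mul_left r).congr_fun fun n => by
      rw [show (-(n + 1 : ℤ)).natAbs = n + 1 by omega, pow_succ']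
  rw [show (1 + r) / (1 - r) = (1 - r)⁻¹ + r * (1 - r)⁻¹ by ring]
  exact hgeom.of_nat_of_neg_add_one hneg

theorem hasSum_pow_natAbs_of_le_abs (hr0 : 0 ≤ r) (hr1 : r < 1) {N : ℕ} (hN : 0 < N) :
    HasSum (fun x : {x : ℤ // N ≤ |x|} => r ^ x.1.natAbs) (2 * r ^ N / (1 - r)) := by
  let g : ℕ ⊕ ℕ → ℤ := Sum.elim (fun n => N + n) (fun n => -(N + n))
  have hg : g.Injective := by
    rintro (m | m) (n | n) h <;> simp [g] at h <;> first | omega | (subst h; rfl)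
  have hrange : Set.range g = {x : ℤ | N ≤ |x|} := by
    ext x
    simp only [Set.mem_range, Set.mem_ofPred_eq, le_abs, Sum.exists, g, Sum.elim_inl, Sum.elim_inr]
    constructor
    · rintro (⟨n, rfl⟩ | ⟨n, rfl⟩) <;> omega
    · rintro (h | h)
      · exact Or.inl ⟨(x - N).toNat, by omega⟩
      · exact Or.inr ⟨(-x - N).toNat, by omega⟩
  have hray : HasSum (fun n : ℕ => r ^ (N + n)) (r ^ N / (1 - r)) := by
    simpa only [pow_add, div_eq_mul_inv] using (hasSum_geometric_of_lt_one hr0 hr1).mul_left (r ^ N)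
  have hsum : HasSum ((fun x : ℤ => r ^ x.natAbs) ∘ g) (r ^ N / (1 - r) + r ^ N / (1 - r)) :=
    HasSum.sum
      (hray.congr_fun fun n => congrArg (r ^ ·) (show ((N : ℤ) + n).natAbs = N + n by omega))
      (hray.congr_fun fun n => congrArg (r ^ ·) (show (-((N : ℤ) + n)).natAbs = N + n by omega))
  rw [← hg.hasSum_range_iff, hrange, ← two_mul, ← mul_div_assoc] at hsum
  exact hsum

end TwoSidedGeometric

section DiscreteLaplace

variable {t : ℝ}

noncomputable def discreteLaplace (t : ℝ) (x : ℤ) : ℝ :=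
  (exp (1 / t) - 1) / (exp (1 / t) + 1) * exp (-|(x : ℝ)| / t)

theorem exp_neg_abs_div_eq_pow (t : ℝ) (x : ℤ) :
    exp (-|(x : ℝ)| / t) = exp (-1 / t) ^ x.natAbs := by
  rw [← exp_nat_mul, Nat.cast_natAbs, Int.cast_abs]
  ring_nf

theorem exp_one_div_mul_exp_neg_one_div (t : ℝ) : exp (1 / t) * exp (-1 / t) = 1 := by
  rw [← exp_add, neg_div, add_neg_cancel, exp_zero]

theorem exp_neg_one_div_lt_one (ht : 0 < t) : exp (-1 / t) < 1 :=
  exp_lt_one_iff.2 (div_neg_of_neg_of_pos neg_one_lt_zero ht)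

theorem discreteLaplace_pos (ht : 0 < t) (x : ℤ) : 0 < discreteLaplace t x := by
  have : 0 < exp (1 / t) - 1 := sub_pos.2 (one_lt_exp_iff.2 (by positivity))
  unfold discreteLaplace
  positivity

theorem discreteLaplace_const_mul_div_one_sub (ht : 0 < t) (a : ℝ) :
    (exp (1 / t) - 1) / (exp (1 / t) + 1) * (a / (1 - exp (-1 / t))) =
      exp (1 / t) * a / (exp (1 / t) + 1) := by
  have hEr := exp_one_div_mul_exp_neg_one_div t
  have hr := (sub_pos.2 (exp_neg_one_div_lt_one ht)).ne'
  have hE := exp_pos (1 / t)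
  generalize exp (1 / t) = E at *
  generalize exp (-1 / t) = r at *
  field_simp
  linear_combination a * hEr

theorem hasSum_discreteLaplace (ht : 0 < t) : HasSum (discreteLaplace t) 1 := by
  have hsum := (hasSum_pow_natAbs (exp_pos _).le (exp_neg_one_div_lt_one ht)).mul_left
    ((exp (1 / t) - 1) / (exp (1 / t) + 1))
  rw [discreteLaplace_const_mul_div_one_sub ht, mul_add, mul_one, exp_one_div_mul_exp_neg_one_div,
    div_self (by positivity)] at hsum
  exact hsum.congr_fun fun x => by rw [discreteLaplace, exp_neg_abs_div_eq_pow]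

theorem hasSum_discreteLaplace_tail (ht : 0 < t) {N : ℕ} (hN : 0 < N) :
    HasSum (fun x : {x : ℤ // N ≤ |x|} => discreteLaplace t x)
      (2 * exp (-(N - 1) / t) / (exp (1 / t) + 1)) := by
  have hsum := (hasSum_pow_natAbs_of_le_abs (exp_pos _).le (exp_neg_one_div_lt_one ht) hN).mul_left
    ((exp (1 / t) - 1) / (exp (1 / t) + 1))
  have hpow : exp (1 / t) * (2 * exp (-1 / t) ^ N) = 2 * exp (-(N - 1) / t) := by
    rw [mul_left_comm, ← exp_nat_mul, ← exp_add]
    ring_nf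
  rw [discreteLaplace_const_mul_div_one_sub ht, hpow] at hsum
  exact hsum.congr_fun fun x => by rw [discreteLaplace, exp_neg_abs_div_eq_pow]

end DiscreteLaplace

/-- Tail of the discrete Laplace distribution `Lap_ℤ(t)`:
`Pr[|Y| ≥ N] = 2·e^{−(N−1)/t}/(e^{1/t} + 1)`, and the statistical distance between `Lap_ℤ(t)`
and its truncation (conditioning) to `(−N, N) ∩ ℤ` equals the same quantity. -/
theorem discrete_laplace_tail_and_truncation_distance
    (t : ℝ) (ht : 0 < t) (N : ℤ) (hN : 1 ≤ N)
    (f : ℤ → ℝ)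
    (hf : ∀ x : ℤ, f x = (Real.exp (1 / t) - 1) / (Real.exp (1 / t) + 1)
        * Real.exp (-|(x : ℝ)| / t))
    (q : ℤ → ℝ)
    (hq : ∀ x : ℤ, q x = if -N < x ∧ x < N
        then f x / ∑' y : {y : ℤ // -N < y ∧ y < N}, f y else 0) :
    (∑' x : {x : ℤ // N ≤ |x|}, f x)
        = 2 * Real.exp (-((N : ℝ) - 1) / t) / (Real.exp (1 / t) + 1)
    ∧ (1 / 2) * ∑' x : ℤ, |f x - q x|
        = 2 * Real.exp (-((N : ℝ) - 1) / t) / (Real.exp (1 / t) + 1) := by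
  lift N to ℕ using by omega
  obtain rfl : f = discreteLaplace t := funext hf
  let s : Set ℤ := {x | -(N : ℤ) < x ∧ x < N}
  have htail := hasSum_discreteLaplace_tail ht (N := N) (by omega)
  have hcompl : sᶜ = {x : ℤ | N ≤ |x|} := by
    ext x
    simp only [s, Set.mem_compl_iff, Set.mem_ofPred_eq, le_abs, not_and_or, not_lt]
    omega
  have hq_trunc : q = truncation (discreteLaplace t) s :=
    funext fun x => by rw [hq, truncation, Set.indicator_apply]; rfl
  have hpos (x : ℤ) := discreteLaplace_pos ht x
  have hmass : 0 < ∑' y : s, discreteLaplace t y :=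
    ((hasSum_discreteLaplace ht).summable.subtype s).tsum_pos (fun y => (hpos y.1).le)
      ⟨0, show -(N : ℤ) < 0 ∧ 0 < (N : ℤ) by omega⟩ (hpos 0)
  push_cast
  rw [hq_trunc,
    half_tsum_abs_sub_truncation (fun x => (hpos x).le) (hasSum_discreteLaplace ht) hmass, hcompl]
  exact ⟨htail.tsum_eq, htail.tsum_eq⟩
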